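/- Let n ≥ 1 and let ζ : ℝ → (0,∞) be continuous and strictly decreasing with ∫₀^∞ ζ(t) t^(n−1) dt < ∞. If u, v ∈ Conv_c^{(n)}(ℝⁿ) are such that epi u ⊆ epi v and ∫_{ℝⁿ} ζ(u(x)) dx = ∫_{ℝⁿ} ζ(v(x)) dx, then u ≡ v. -/

import Mathlib

open MeasureTheory Filter Topology Set
open scoped Classical ENNReal

noncomputable section

abbrev En (n : ℕ) := EuclideanSpace ℝ (Fin n)

/-- `ζ` applied to an extended real value, with the convention `ζ (+∞) = 0`. -/
def zeval (ζ : ℝ → ℝ) (t : EReal) : ℝ := if t = ⊤ then 0 else ζ t.toReal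

/-- The epigraph of an extended-real-valued function. -/
def epiSet {n : ℕ} (u : En n → EReal) : Set (En n × ℝ) := {p | u p.1 ≤ (p.2 : EReal)}

/-- `Conv_c(ℝⁿ)`: proper, lower semicontinuous, convex, coercive functions with
values in `ℝ ∪ {+∞}`. -/
def ConvC (n : ℕ) (u : En n → EReal) : Prop :=
  (∀ x, u x ≠ ⊥) ∧ (∃ x, u x ≠ ⊤) ∧ LowerSemicontinuous u ∧
    Convex ℝ (epiSet u) ∧ Tendsto u (cocompact (En n)) (𝓝 ⊤)

/-- `Conv_c^{(n)}(ℝⁿ)`: members of `Conv_c(ℝⁿ)` with full-dimensional domain. -/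
def ConvCd (n : ℕ) (u : En n → EReal) : Prop :=
  ConvC n u ∧ (interior {x | u x ≠ ⊤}).Nonempty

/-- Epi-convergence of a sequence of extended-real-valued functions. -/
def EpiTendsto {n : ℕ} (u : ℕ → En n → EReal) (v : En n → EReal) : Prop :=
  ∀ x : En n,
    (∀ y : ℕ → En n, Tendsto y atTop (𝓝 x) →
      v x ≤ Filter.liminf (fun k => u k (y k)) atTop) ∧
    (∃ y : ℕ → En n, Tendsto y atTop (𝓝 x) ∧
      Filter.limsup (fun k => u k (y k)) atTop ≤ v x)

/-- Super-coercivity: `u x / ‖x‖ → +∞` as `‖x‖ → ∞`. -/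
def SuperCoercive {n : ℕ} (u : En n → EReal) : Prop :=
  ∀ M : ℝ, ∀ᶠ x in cocompact (En n), ((M * ‖x‖ : ℝ) : EReal) ≤ u x

/-- The functional `δ_{ζ,p}`. -/
def deltaZP {n : ℕ} (ζ : ℝ → ℝ) (p : ℝ) (u v : En n → EReal) : ℝ :=
  (∫ x : En n, |zeval ζ (u x) - zeval ζ (v x)| ^ p) ^ (1 / p)

/-- The functional `δ_{ζ,1} = δ_ζ`. -/
def delta1 {n : ℕ} (ζ : ℝ → ℝ) (u v : En n → EReal) : ℝ :=
  ∫ x : En n, |zeval ζ (u x) - zeval ζ (v x)|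

/-- `f` applied to an extended real value with the convention `f (+∞) = +∞`. -/
def emap (f : ℝ → ℝ) (t : EReal) : EReal := if t = ⊤ then ⊤ else ((f t.toReal : ℝ) : EReal)

/-- The (convex) indicator function `I^∞_K + t`. -/
def indE {n : ℕ} (K : Set (En n)) (t : ℝ) : En n → EReal :=
  fun x => if x ∈ K then (t : EReal) else ⊤

/-- Nondegenerate parallelotope: Minkowski sum of `n` linearly independent segments. -/
def IsParallelotope {n : ℕ} (P : Set (En n)) : Prop :=
  ∃ (z : En n) (b : Fin n → En n), LinearIndependent ℝ b ∧
    P = (fun c : Fin n → ℝ => z + ∑ i, c i • b i) '' (Set.univ.pi fun _ => Set.Icc (0:ℝ) 1)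

/-- Convex body with nonempty interior. -/
def IsConvexBodyI {n : ℕ} (K : Set (En n)) : Prop :=
  IsCompact K ∧ Convex ℝ K ∧ (interior K).Nonempty

/-- Convex body: nonempty compact convex set. -/
def IsCB {n : ℕ} (K : Set (En n)) : Prop := K.Nonempty ∧ IsCompact K ∧ Convex ℝ K

/-- The extension `d̂_H` of the Hausdorff metric to `K(ℝⁿ) ∪ {∅}`. -/
def dhatH {n : ℕ} (K L : Set (En n)) : ℝ :=
  if K = ∅ then (if L = ∅ then 0 else max 1 (Metric.hausdorffDist L {0}))
  else if L = ∅ then max 1 (Metric.hausdorffDist K {0})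
  else Metric.hausdorffDist K L

/-- The functional `δ_ζ^H`. -/
def deltaH {n : ℕ} (ζ : ℝ → ℝ) (u v : En n → EReal) : ℝ :=
  ∫ s in Set.Ioi (0:ℝ), dhatH {x | s ≤ zeval ζ (u x)} {x | s ≤ zeval ζ (v x)}

/-- The Legendre–Fenchel conjugate. -/
def conjF {n : ℕ} (u : En n → EReal) : En n → EReal :=
  fun y => ⨆ x : En n, (((inner ℝ x y : ℝ) : EReal) - u x)

/-- The admissible set in the definition of the Hausdorff-type metric `δ` of Section 5.2:
`λ > 0` such that `‖u^* - v^*‖_{∞, (1/λ)Bⁿ} ≤ λ`. -/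
def DSet {n : ℕ} (u v : En n → EReal) : Set ℝ :=
  {l : ℝ | 0 < l ∧ ∀ x : En n, ‖x‖ ≤ 1 / l →
    conjF u x ≤ conjF v x + (l : EReal) ∧ conjF v x ≤ conjF u x + (l : EReal)}

/-- The Hausdorff-type metric `δ` of Section 5.2. -/
def deltaStar {n : ℕ} (u v : En n → EReal) : ℝ := sInf (DSet u v)

/-
Since `epi u ⊆ epi v` means `v ≤ u`, and `ζ` is decreasing, `ζ ∘ u ≤ ζ ∘ v`. A coercive
convex function grows at least linearly, so the moment condition on `ζ` makes both `ζ ∘ u` and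
`ζ ∘ v` integrable; equal integrals then force `ζ ∘ u = ζ ∘ v` a.e., hence `u = v` a.e. as `ζ` is
strictly decreasing and positive. On the interior of `dom v` the convex function `v` is continuous,
and `{u = v}` is dense, so lower semicontinuity of `u` gives `u ≤ v` there. A remaining point `x`
of `dom v` is approached along a segment from an interior point, on which `u = v` lies below the
chord, whose limit is `v x`; lower semicontinuity of `u` once more gives `u x ≤ v x`.
-/

@[simp]
lemma zeval_coe (ζ : ℝ → ℝ) (t : ℝ) : zeval ζ t = ζ t := by
  simp [zeval]

section Zeval

variable {ζ : ℝ → ℝ}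

lemma zeval_nonneg (hζ : ∀ t, 0 ≤ ζ t) (t : EReal) : 0 ≤ zeval ζ t := by
  unfold zeval
  split_ifs
  exacts [le_rfl, hζ _]

lemma measurable_zeval (hζ : Measurable ζ) : Measurable (zeval ζ) :=
  Measurable.ite (measurableSet_singleton ⊤) measurable_const (hζ.comp measurable_ereal_toReal)

lemma antitoneOn_zeval (hζ₀ : ∀ t, 0 ≤ ζ t) (hζ : Antitone ζ) :
    AntitoneOn (zeval ζ) {t | t ≠ ⊥} := by
  intro s hs t _ hst
  by_cases ht : t = ⊤
  · simpa [zeval, ht] using zeval_nonneg hζ₀ s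
  · have hs' : s ≠ ⊤ := ne_top_of_le_ne_top ht hst
    simpa [zeval, ht, hs'] using hζ (EReal.toReal_le_toReal hst hs ht)

lemma strictAntiOn_zeval (hζ₀ : ∀ t, 0 < ζ t) (hζ : StrictAnti ζ) :
    StrictAntiOn (zeval ζ) {t | t ≠ ⊥} := by
  intro s hs t _ hst
  obtain ⟨a, rfl⟩ : ∃ a : ℝ, s = a := ⟨s.toReal, (EReal.coe_toReal hst.ne_top hs).symm⟩
  by_cases ht : t = ⊤
  · simpa [zeval, ht] using hζ₀ a
  · obtain ⟨b, rfl⟩ : ∃ b : ℝ, t = b :=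
      ⟨t.toReal, (EReal.coe_toReal ht (ne_bot_of_gt hst)).symm⟩
    simpa using hζ (EReal.coe_lt_coe_iff.1 hst)

end Zeval

lemma LowerSemicontinuousAt.le_of_tendsto {X ι γ : Type*} [TopologicalSpace X] [LinearOrder γ]
    [DenselyOrdered γ] [TopologicalSpace γ] [OrderTopology γ] {f : X → γ} {x : X}
    (hf : LowerSemicontinuousAt f x) {l : Filter ι} [l.NeBot] {y : ι → X}
    (hy : Tendsto y l (𝓝 x)) {g : ι → γ} {a : γ} (hg : Tendsto g l (𝓝 a))
    (hfg : ∀ᶠ i in l, f (y i) ≤ g i) : f x ≤ a :=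
  le_of_forall_lt_imp_le_of_dense fun b hb =>
    ge_of_tendsto hg <| ((hy.eventually (hf b hb)).and hfg).mono fun _ h => h.1.le.trans h.2

lemma exists_coe_le_of_tendsto_cocompact {X : Type*} [TopologicalSpace X] {u : X → EReal}
    (hlsc : LowerSemicontinuous u) (hbot : ∀ x, u x ≠ ⊥)
    (hcoer : Tendsto u (cocompact X) (𝓝 ⊤)) : ∃ m : ℝ, ∀ x, (m : EReal) ≤ u x := by
  obtain ⟨K, hK, hKu⟩ :=
    hasBasis_cocompact.eventually_iff.1 (EReal.tendsto_nhds_top_iff_real.1 hcoer 0)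
  rcases K.eq_empty_or_nonempty with rfl | hne
  · exact ⟨0, fun x => (hKu (notMem_empty x)).le⟩
  obtain ⟨a, -, ha⟩ := (hlsc.lowerSemicontinuousOn K).exists_isMinOn hne hK
  refine ⟨min 0 (u a).toReal, fun x => ?_⟩
  by_cases hx : x ∈ K
  · calc ((min 0 (u a).toReal : ℝ) : EReal) ≤ (u a).toReal := by exact_mod_cast min_le_right _ _
      _ ≤ u a := EReal.coe_toReal_le (hbot a)
      _ ≤ u x := ha hx
  · calc ((min 0 (u a).toReal : ℝ) : EReal) ≤ (0 : ℝ) := by exact_mod_cast min_le_left _ _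
      _ ≤ u x := (hKu hx).le

section NormedSpace

variable {E : Type*} [NormedAddCommGroup E] [NormedSpace ℝ E] {u v : E → EReal}

lemma coe_add_norm_div_le_of_forall_sphere_lt (hbot : ∀ x, u x ≠ ⊥)
    (hconv : ConvexOn ℝ {x | u x ≠ ⊤} fun x => (u x).toReal) {x₀ : E} (hx₀ : u x₀ ≠ ⊤) {R : ℝ}
    (hR : 0 < R) (hsphere : ∀ y, ‖y - x₀‖ = R → (((u x₀).toReal + 1 : ℝ) : EReal) < u y)
    {x : E} (hx : R ≤ ‖x - x₀‖) : (((u x₀).toReal + ‖x - x₀‖ / R : ℝ) : EReal) ≤ u x := by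
  by_cases hxtop : u x = ⊤
  · simp [hxtop]
  rw [← EReal.coe_toReal hxtop (hbot x), EReal.coe_le_coe_iff]
  set d := ‖x - x₀‖
  have hd : 0 < d := hR.trans_le hx
  set θ := R / d
  have hθ : 0 < θ := by positivity
  have hθd : θ * d = R := div_mul_cancel₀ R hd.ne'
  have hθ₁ : θ ≤ 1 := (div_le_one hd).2 hx
  set y := θ • x + (1 - θ) • x₀
  have hyR : ‖y - x₀‖ = R := by
    rw [show y - x₀ = θ • (x - x₀) by simp only [y]; module, norm_smul,
      Real.norm_of_nonneg hθ.le]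
    exact hθd
  have hy : (u x₀).toReal + 1 < (u y).toReal := by
    have hyfin : u y ≠ ⊤ := hconv.1 hxtop hx₀ hθ.le (by linarith) (by ring)
    have := hsphere y hyR
    rwa [← EReal.coe_toReal hyfin (hbot y), EReal.coe_lt_coe_iff] at this
  have hchord : (u y).toReal ≤ θ * (u x).toReal + (1 - θ) * (u x₀).toReal :=
    hconv.2 hxtop hx₀ hθ.le (by linarith) (by ring)
  have : d < R * ((u x).toReal - (u x₀).toReal) := by
    have h := mul_lt_mul_of_pos_left
      (show 1 < θ * ((u x).toReal - (u x₀).toReal) by linarith) hd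
    rwa [mul_one, ← mul_assoc, mul_comm d, hθd] at h
  linarith [(div_lt_iff₀' hR).2 this]

lemma exists_mul_norm_le_of_tendsto_cocompact (hbot : ∀ x, u x ≠ ⊥)
    (hconv : ConvexOn ℝ {x | u x ≠ ⊤} fun x => (u x).toReal) (hdom : ∃ x, u x ≠ ⊤)
    (hcoer : Tendsto u (cocompact E) (𝓝 ⊤)) :
    ∃ x₀ : E, ∃ c T : ℝ, 0 < c ∧ ∀ x, T ≤ ‖x - x₀‖ → ((c * ‖x - x₀‖ : ℝ) : EReal) ≤ u x := by
  obtain ⟨x₀, hx₀⟩ := hdom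
  set t₀ := (u x₀).toReal
  obtain ⟨K, hK, hKu⟩ :=
    hasBasis_cocompact.eventually_iff.1 (EReal.tendsto_nhds_top_iff_real.1 hcoer (t₀ + 1))
  obtain ⟨R₀, hR₀⟩ := hK.isBounded.subset_closedBall x₀
  set R := max R₀ 0 + 1
  have hR : 0 < R := by positivity
  have hsphere : ∀ y, ‖y - x₀‖ = R → ((t₀ + 1 : ℝ) : EReal) < u y := fun y hy =>
    hKu fun hyK => by
      have := hR₀ hyK
      rw [Metric.mem_closedBall, dist_eq_norm, hy] at this
      linarith [le_max_left R₀ 0]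
  refine ⟨x₀, 1 / (2 * R), max R (-2 * R * t₀), by positivity, fun x hx => ?_⟩
  refine le_trans ?_ (coe_add_norm_div_le_of_forall_sphere_lt hbot hconv hx₀ hR hsphere
    ((le_max_left _ _).trans hx))
  rw [EReal.coe_le_coe_iff]
  have : -t₀ ≤ ‖x - x₀‖ / (2 * R) := by
    rw [le_div_iff₀ (by positivity)]
    linarith [(le_max_right _ _).trans hx]
  have : 1 / (2 * R) * ‖x - x₀‖ = ‖x - x₀‖ / R - ‖x - x₀‖ / (2 * R) := by field_simp; ring
  linarith

lemma continuousAt_of_mem_interior_dom [FiniteDimensional ℝ E] (hbot : ∀ x, v x ≠ ⊥)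
    (hv : ConvexOn ℝ {x | v x ≠ ⊤} fun x => (v x).toReal) {x : E}
    (hx : x ∈ interior {x | v x ≠ ⊤}) : ContinuousAt v x := by
  have hreal : ContinuousAt (fun y => ((v y).toReal : EReal)) x :=
    continuous_coe_real_ereal.continuousAt.comp
      (hv.continuousOn_interior.continuousAt (isOpen_interior.mem_nhds hx))
  refine hreal.congr (eventually_of_mem (isOpen_interior.mem_nhds hx) fun y hy => ?_)
  exact EReal.coe_toReal (interior_subset hy) (hbot y)

lemma le_of_ae_eq_of_mem_interior_dom [FiniteDimensional ℝ E] [MeasurableSpace E]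
    (μ : Measure E) [μ.IsOpenPosMeasure] (hu : LowerSemicontinuous u) (hbot : ∀ x, v x ≠ ⊥)
    (hv : ConvexOn ℝ {x | v x ≠ ⊤} fun x => (v x).toReal) (hae : u =ᵐ[μ] v) {x : E}
    (hx : x ∈ interior {x | v x ≠ ⊤}) : u x ≤ v x := by
  set S := {y | u y = v y}
  have : (𝓝[S] x).NeBot := mem_closure_iff_nhdsWithin_neBot.1 (μ.dense_of_ae hae x)
  exact LowerSemicontinuousAt.le_of_tendsto (hu x) (tendsto_id.mono_left nhdsWithin_le_nhds)
    ((continuousAt_of_mem_interior_dom hbot hv hx).tendsto.mono_left nhdsWithin_le_nhds)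
    (eventually_nhdsWithin_of_forall (s := S) fun y hy => hy.le)

lemma le_of_le_on_interior_dom (hu : LowerSemicontinuous u) (hbot : ∀ x, v x ≠ ⊥)
    (hv : ConvexOn ℝ {x | v x ≠ ⊤} fun x => (v x).toReal) {x₁ : E}
    (hx₁ : x₁ ∈ interior {x | v x ≠ ⊤}) (hle : ∀ y ∈ interior {x | v x ≠ ⊤}, u y ≤ v y)
    (x : E) : u x ≤ v x := by
  by_cases hx : v x = ⊤
  · simp [hx]
  set γ : ℝ → E := fun t => AffineMap.lineMap x x₁ t
  set chord : ℝ → ℝ := fun t => (1 - t) * (v x).toReal + t * (v x₁).toReal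
  have hγ : Tendsto γ (𝓝[>] 0) (𝓝 x) := by
    have := (AffineMap.lineMap_continuous (p := x) (q := x₁) (R := ℝ)).tendsto (0 : ℝ)
    simpa [γ] using this.mono_left nhdsWithin_le_nhds
  have hchord : Tendsto (fun t => (chord t : EReal)) (𝓝[>] 0) (𝓝 (v x)) := by
    have : Continuous chord := by fun_prop
    rw [← EReal.coe_toReal hx (hbot x), show (v x).toReal = chord 0 by simp [chord]]
    exact (continuous_coe_real_ereal.tendsto _).comp
      ((this.tendsto 0).mono_left nhdsWithin_le_nhds)
  refine LowerSemicontinuousAt.le_of_tendsto (hu x) hγ hchord ?_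
  filter_upwards [Ioo_mem_nhdsGT one_pos] with t ht
  have hmem : γ t ∈ interior {x | v x ≠ ⊤} :=
    hv.1.openSegment_self_interior_subset_interior hx hx₁
      (by rw [openSegment_eq_image_lineMap]; exact ⟨t, ht, rfl⟩)
  have hconv : (v (γ t)).toReal ≤ chord t := by
    simpa [γ, chord, AffineMap.lineMap_apply_module] using
      hv.2 hx (interior_subset hx₁) (by linarith [ht.2] : 0 ≤ 1 - t) ht.1.le (by ring)
  calc u (γ t) ≤ v (γ t) := hle _ hmem
    _ = (v (γ t)).toReal := (EReal.coe_toReal (interior_subset hmem) (hbot _)).symm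
    _ ≤ chord t := by exact_mod_cast hconv

lemma eq_of_le_of_ae_eq [FiniteDimensional ℝ E] [MeasurableSpace E] (μ : Measure E)
    [μ.IsOpenPosMeasure] (hu : LowerSemicontinuous u) (hbot : ∀ x, v x ≠ ⊥)
    (hv : ConvexOn ℝ {x | v x ≠ ⊤} fun x => (v x).toReal)
    (hint : (interior {x | v x ≠ ⊤}).Nonempty) (hle : v ≤ u) (hae : u =ᵐ[μ] v) : u = v := by
  obtain ⟨x₁, hx₁⟩ := hint
  funext x
  exact le_antisymm (le_of_le_on_interior_dom hu hbot hv hx₁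
    (fun y hy => le_of_ae_eq_of_mem_interior_dom μ hu hbot hv hae hy) x) (hle x)

end NormedSpace

lemma integrable_comp_mul_norm {E : Type*} [NormedAddCommGroup E] [NormedSpace ℝ E]
    [FiniteDimensional ℝ E] [Nontrivial E] [MeasurableSpace E] [BorelSpace E] (μ : Measure E)
    [μ.IsAddHaarMeasure] {f : ℝ → ℝ}
    (hf : IntegrableOn (fun t => f t * t ^ (Module.finrank ℝ E - 1)) (Ioi 0)) {c : ℝ}
    (hc : 0 < c) : Integrable (fun x => f (c * ‖x‖)) μ := by
  rw [integrable_fun_norm_addHaar μ (f := fun r => f (c * r))]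
  have hscaled := ((integrableOn_Ioi_comp_mul_left_iff _ 0 hc).2
    (by simpa using hf)).integrable.const_mul (c ^ (Module.finrank ℝ E - 1))⁻¹
  refine hscaled.congr (.of_forall fun t => ?_)
  simp only [smul_eq_mul, mul_pow]
  field_simp

section ConvC

variable {n : ℕ} {u v : En n → EReal}

lemma epiSet_eq_epigraph (hbot : ∀ x, u x ≠ ⊥) :
    epiSet u = {p | p.1 ∈ {x | u x ≠ ⊤} ∧ (u p.1).toReal ≤ p.2} := by
  ext ⟨x, t⟩
  simp only [epiSet, mem_ofPred_eq]
  refine ⟨fun h => ⟨ne_top_of_le_ne_top (EReal.coe_ne_top t) h, ?_⟩, fun ⟨hx, h⟩ => ?_⟩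
  · simpa using EReal.toReal_le_toReal h (hbot x) (EReal.coe_ne_top t)
  · rw [← EReal.coe_toReal hx (hbot x)]
    exact_mod_cast h

lemma convexOn_toReal_of_convex_epiSet (hbot : ∀ x, u x ≠ ⊥) (hconv : Convex ℝ (epiSet u)) :
    ConvexOn ℝ {x | u x ≠ ⊤} fun x => (u x).toReal :=
  convexOn_iff_convex_epigraph.2 (epiSet_eq_epigraph hbot ▸ hconv)

lemma le_of_epiSet_subset (hbot : ∀ x, u x ≠ ⊥) (hsub : epiSet u ⊆ epiSet v) : v ≤ u := by
  intro x
  by_cases hx : u x = ⊤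
  · simp [hx]
  · calc v x ≤ (u x).toReal := hsub (EReal.le_coe_toReal hx : (x, (u x).toReal) ∈ epiSet u)
      _ ≤ u x := EReal.coe_toReal_le (hbot x)

lemma ConvC.integrable_zeval (hu : ConvC n u) (hn : 1 ≤ n) {ζ : ℝ → ℝ} (hζ₀ : ∀ t, 0 ≤ ζ t)
    (hζ : Antitone ζ) (hmom : IntegrableOn (fun t => ζ t * t ^ (n - 1)) (Ioi 0)) :
    Integrable fun x => zeval ζ (u x) := by
  obtain ⟨hbot, hdom, hlsc, hconv, hcoer⟩ := hu
  have : Nonempty (Fin n) := ⟨⟨0, hn⟩⟩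
  obtain ⟨m, hm⟩ := exists_coe_le_of_tendsto_cocompact hlsc hbot hcoer
  obtain ⟨x₀, c, T, hc, hgrowth⟩ := exists_mul_norm_le_of_tendsto_cocompact hbot
    (convexOn_toReal_of_convex_epiSet hbot hconv) hdom hcoer
  have hradial : Integrable fun x : En n => ζ (c * ‖x - x₀‖) :=
    (integrable_comp_mul_norm volume (by simpa using hmom) hc).comp_sub_right x₀
  have hball : Integrable ((Metric.closedBall x₀ T).indicator fun _ => ζ m) :=
    (integrable_indicator_iff measurableSet_closedBall).2
      (integrableOn_const measure_closedBall_lt_top.ne)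
  have hle : ∀ x (r : ℝ), (r : EReal) ≤ u x → zeval ζ (u x) ≤ ζ r := fun x r hr =>
    zeval_coe ζ r ▸ antitoneOn_zeval hζ₀ hζ (EReal.coe_ne_bot r) (hbot x) hr
  refine (hball.add hradial).mono'
    ((measurable_zeval hζ.measurable).comp hlsc.measurable).aestronglyMeasurable
    (.of_forall fun x => ?_)
  rw [Real.norm_of_nonneg (zeval_nonneg hζ₀ _), Pi.add_apply]
  by_cases hx : x ∈ Metric.closedBall x₀ T
  · rw [indicator_of_mem hx]
    linarith [hle x m (hm x), hζ₀ (c * ‖x - x₀‖)]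
  · rw [indicator_of_notMem hx, zero_add]
    rw [Metric.mem_closedBall, dist_eq_norm, not_le] at hx
    exact hle x _ (hgrowth x hx.le)

end ConvC

theorem statement8_general (n : ℕ) (hn : 1 ≤ n)
    (ζ : ℝ → ℝ) (hζpos : ∀ t, 0 < ζ t) (hζanti : StrictAnti ζ)
    (hmom : IntegrableOn (fun t => ζ t * t ^ (n - 1)) (Set.Ioi (0:ℝ)))
    (u v : En n → EReal) (hu : ConvCd n u) (hv : ConvCd n v)
    (hsub : epiSet u ⊆ epiSet v)
    (heq : ∫ x : En n, zeval ζ (u x) = ∫ x : En n, zeval ζ (v x)) :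
    u = v := by
  have hle : v ≤ u := le_of_epiSet_subset hu.1.1 hsub
  have hζ := strictAntiOn_zeval hζpos hζanti
  have hint : ∀ {w : En n → EReal}, ConvCd n w → Integrable fun x => zeval ζ (w x) :=
    fun hw => hw.1.integrable_zeval hn (fun t => (hζpos t).le) hζanti.antitone hmom
  have hzeval : (fun x => zeval ζ (u x)) =ᵐ[volume] fun x => zeval ζ (v x) :=
    (integral_eq_iff_of_ae_le (hint hu) (hint hv)
      (.of_forall fun x => hζ.antitoneOn (hv.1.1 x) (hu.1.1 x) (hle x))).1 heq
  exact eq_of_le_of_ae_eq volume hu.1.2.2.1 hv.1.1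
    (convexOn_toReal_of_convex_epiSet hv.1.1 hv.1.2.2.2.1) hv.2 hle
    (hzeval.mono fun x hx => hζ.injOn (hu.1.1 x) (hv.1.1 x) hx)

theorem statement8 (n : ℕ) (hn : 1 ≤ n)
    (ζ : ℝ → ℝ) (hζpos : ∀ t, 0 < ζ t) (hζcont : Continuous ζ) (hζanti : StrictAnti ζ)
    (hmom : IntegrableOn (fun t => ζ t * t ^ (n - 1)) (Set.Ioi (0:ℝ)))
    (u v : En n → EReal) (hu : ConvCd n u) (hv : ConvCd n v)
    (hsub : epiSet u ⊆ epiSet v)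
    (heq : ∫ x : En n, zeval ζ (u x) = ∫ x : En n, zeval ζ (v x)) :
    u = v :=
  statement8_general n hn ζ hζpos hζanti hmom u v hu hv hsub heq
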